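/- Let D be a strongly connected digraph on n ≥ 2 vertices such that for every pair of non-adjacent vertices x, y that have a common out-neighbour or a common in-neighbour, one has min{d⁺(x)+d⁻(y), d⁻(x)+d⁺(y)} ≥ n−1 and d(x)+d(y) ≥ 2n−1. Suppose D is not Hamiltonian, let C := x₁x₂…x_m x₁ be a longest cycle of D, and let R := V(D) − V(C). Let y ∈ R, and suppose there are vertices x_α ≠ x_β on C with x_α y ∈ A(D), y x_β ∈ A(D), and no arcs between y and the vertices of C outside the subpath C[x_β, x_α] from x_β to x_α along C. Let C′ := C[x_{α+1}, x_{β−1}] and C″ := C[x_β, x_α]. Then: |V(C′)| ≥ 1; d(y,C) = d(y,C″) = |V(C″)|+1; d⁺(x_{β−1},C″)+d⁻(x_{α+1},C″) = |V(C″)|+1; d(y,R)+d⁺(x_{β−1},R)+d⁻(x_{α+1},R) = 2(n−m−1); and d⁺(x_{β−1},C′) = d⁻(x_{α+1},C′) = |V(C′)|−1. -/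

import Mathlib

variable {V : Type*}

/-- Rotate an index of `Fin m` forward by `k` steps (indices mod `m`). -/
def finRot {m : ℕ} (i : Fin m) (k : ℕ) : Fin m :=
  ⟨(i.val + k) % m, Nat.mod_lt _ (Nat.lt_of_le_of_lt (Nat.zero_le i.val) i.isLt)⟩

/-- `c : Fin k → V` is a directed cycle of length `k`: distinct vertices with an
arc from each vertex to the next one (cyclically). -/
def IsCycle (A : V → V → Prop) {k : ℕ} (c : Fin k → V) : Prop :=
  Function.Injective c ∧ ∀ i, A (c i) (c (finRot i 1))

/-- Out-degree of `x`. -/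
def outDeg [Fintype V] (A : V → V → Prop) [DecidableRel A] (x : V) : ℕ :=
  (Finset.univ.filter fun y => A x y).card

/-- In-degree of `x`. -/
def inDeg [Fintype V] (A : V → V → Prop) [DecidableRel A] (x : V) : ℕ :=
  (Finset.univ.filter fun y => A y x).card

/-- Degree of `x`. -/
def deg [Fintype V] (A : V → V → Prop) [DecidableRel A] (x : V) : ℕ :=
  outDeg A x + inDeg A x

/-- Out-degree of `x` into the set `S`. -/
def outDegOn (A : V → V → Prop) [DecidableRel A] (x : V) (S : Finset V) : ℕ :=
  (S.filter fun y => A x y).card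

/-- In-degree of `x` from the set `S`. -/
def inDegOn (A : V → V → Prop) [DecidableRel A] (x : V) (S : Finset V) : ℕ :=
  (S.filter fun y => A y x).card

/-- Degree of `x` with respect to the set `S`. -/
def degOn (A : V → V → Prop) [DecidableRel A] (x : V) (S : Finset V) : ℕ :=
  outDegOn A x S + inDegOn A x S

/-- The set of indices of the subpath of a cycle on `Fin m` that goes from
index `β` to index `α` (inclusive), following the orientation of the cycle. -/
def cycSeg {m : ℕ} (β α : Fin m) : Finset (Fin m) :=
  (Finset.range ((α.val + m - β.val) % m + 1)).image (finRot β)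

/-!
Enumerate the longest cycle `C` from `x_β`, so that `C″ = x_β … x_α` and
`C′ = x_{α+1} … x_{β-1}`. Each of the following would give a cycle longer than `C`: inserting
`y`, or a path `y z` or `z y` with `z ∈ R`, between two consecutive vertices of `C`; and arcs
`x_{β-1} x_{i+1}`, `x_i x_{α+1}` with `x_i, x_{i+1} ∈ C″`. In particular `C′` is nonempty, and
counting the arcs that remain allowed gives `d(y,C″) ≤ |C″| + 1`,
`d⁺(x_{β-1},C″) + d⁻(x_{α+1},C″) ≤ |C″| + 1`,
`d(y,R) + d⁺(x_{β-1},R) + d⁻(x_{α+1},R) ≤ 2(|R| - 1)` and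
`d⁺(x_{β-1},C′), d⁻(x_{α+1},C′) ≤ |C′| - 1`; as `y` has no neighbour on `C′`,
`d(y) + d⁺(x_{β-1}) + d⁻(x_{α+1}) ≤ 2n - 2`. But `y` is non-adjacent to `x_{α+1}`, with common
in-neighbour `x_α`, and to `x_{β-1}`, with common out-neighbour `x_β`, so the degree condition
gives `d⁺(y) + d⁻(x_{α+1}) ≥ n - 1` and `d⁻(y) + d⁺(x_{β-1}) ≥ n - 1`. Hence every bound above
is an equality.
-/

open Finset

lemma finRot_zero {m : ℕ} (i : Fin m) : finRot i 0 = i :=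
  Fin.ext (Nat.mod_eq_of_lt i.isLt)

lemma finRot_add {m : ℕ} (i : Fin m) (a b : ℕ) : finRot (finRot i a) b = finRot i (a + b) :=
  Fin.ext (by simp [finRot, Nat.add_assoc])

lemma finRot_mod_sub {m : ℕ} (β α : Fin m) : finRot β ((α.val + m - β.val) % m) = α := by
  ext
  simp only [finRot, Nat.add_mod_mod]
  rw [show β.val + (α.val + m - β.val) = α.val + m by omega, Nat.add_mod_right,
    Nat.mod_eq_of_lt α.isLt]

lemma image_range_finRot {m : ℕ} (β : Fin m) : (range m).image (finRot β) = univ :=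
  eq_univ_of_forall fun i =>
    mem_image.2 ⟨_, mem_range.2 (Nat.mod_lt _ β.pos), finRot_mod_sub β i⟩

def CycleLengthsLE (A : V → V → Prop) (m : ℕ) : Prop :=
  ∀ (k : ℕ) (d : Fin k → V), IsCycle A d → k ≤ m

structure IsDipath (A : V → V → Prop) (l : List V) (a b : V) : Prop where
  nodup : l.Nodup
  isChain : l.IsChain A
  head?_eq : l.head? = some a
  getLast?_eq : l.getLast? = some b

namespace IsDipath

variable {A : V → V → Prop} {l l₁ l₂ : List V} {a b a' b' : V}

lemma singleton (v : V) : IsDipath A [v] v v :=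
  ⟨List.nodup_singleton v, List.isChain_singleton v, rfl, rfl⟩

lemma ne_nil (h : IsDipath A l a b) : l ≠ [] := by
  rintro rfl
  simpa using h.head?_eq

lemma append (h₁ : IsDipath A l₁ a b) (h₂ : IsDipath A l₂ a' b') (hba' : A b a')
    (hdisj : l₁.Disjoint l₂) : IsDipath A (l₁ ++ l₂) a b' where
  nodup := h₁.nodup.append h₂.nodup hdisj
  isChain := List.isChain_append.2
    ⟨h₁.isChain, h₂.isChain, by simp [h₁.getLast?_eq, h₂.head?_eq, hba']⟩
  head?_eq := by rw [List.head?_append, h₁.head?_eq]; rfl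
  getLast?_eq := by rw [List.getLast?_append, h₂.getLast?_eq]; rfl

lemma length_le {m : ℕ} (hlongest : CycleLengthsLE A m)
    (h : IsDipath A l a b) (hba : A b a) : l.length ≤ m := by
  have hpos : 0 < l.length := List.length_pos_iff.2 h.ne_nil
  refine hlongest _ l.get ⟨List.nodup_iff_injective_get.1 h.nodup, fun i => ?_⟩
  by_cases hi : i.val + 1 < l.length
  · rw [show finRot i 1 = ⟨i + 1, hi⟩ from Fin.ext (Nat.mod_eq_of_lt hi)]
    exact List.isChain_iff_getElem.1 h.isChain i hi
  · have hlast : i.val = l.length - 1 := by omega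
    have hb := h.getLast?_eq
    have ha := h.head?_eq
    rw [List.getLast?_eq_getElem?, List.getElem?_eq_getElem (by omega), Option.some_inj] at hb
    rw [List.head?_eq_getElem?, List.getElem?_eq_getElem hpos, Option.some_inj] at ha
    rw [show finRot i 1 = ⟨0, hpos⟩ from
      Fin.ext (by simp [finRot, hlast, Nat.sub_add_cancel hpos])]
    simpa [hlast, ha, hb] using hba

end IsDipath

structure IsCycleSeq (A : V → V → Prop) (m : ℕ) (f : ℕ → V) : Prop where
  adj : ∀ t, A (f t) (f (t + 1))
  eq_iff : ∀ s t, f s = f t ↔ s ≡ t [MOD m]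

lemma IsCycle.isCycleSeq {A : V → V → Prop} {m : ℕ} {c : Fin m → V} (hc : IsCycle A c)
    (β : Fin m) : IsCycleSeq A m (fun t => c (finRot β t)) where
  adj t := by simpa only [finRot_add] using hc.2 (finRot β t)
  eq_iff s t := by
    rw [hc.1.eq_iff, Fin.ext_iff]
    exact ⟨Nat.ModEq.add_left_cancel' _, Nat.ModEq.add_left _⟩

def segList (f : ℕ → V) (a b : ℕ) : List V :=
  (List.range' a (b + 1 - a)).map f

section segList

variable {f : ℕ → V} {a b : ℕ}

lemma mem_segList {v : V} : v ∈ segList f a b ↔ ∃ s, a ≤ s ∧ s ≤ b ∧ f s = v := by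
  simp only [segList, List.mem_map, List.mem_range'_1]
  exact exists_congr fun s => by grind

lemma length_segList : (segList f a b).length = b + 1 - a := by
  simp [segList]

lemma disjoint_segList_of_forall_ne {P : List V} (hP : ∀ v ∈ P, ∀ t, f t ≠ v) :
    (segList f a b).Disjoint P := by
  intro v hv hvP
  obtain ⟨s, -, -, rfl⟩ := mem_segList.1 hv
  exact hP _ hvP s rfl

end segList

namespace IsCycleSeq

variable {A : V → V → Prop} {m : ℕ} {f : ℕ → V}

lemma apply_add_period (hf : IsCycleSeq A m f) (t : ℕ) : f (t + m) = f t :=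
  (hf.eq_iff _ _).2 (Nat.add_mod_right t m)

lemma eq_of_apply_eq (hf : IsCycleSeq A m f) {s t : ℕ} (h : f s = f t) (hst : s ≤ t)
    (hts : t < s + m) : s = t := by
  by_contra hne
  have := Nat.le_of_dvd (by omega) ((Nat.modEq_iff_dvd' hst).1 ((hf.eq_iff s t).1 h))
  omega

lemma injOn_range (hf : IsCycleSeq A m f) {k : ℕ} (hk : k ≤ m) : Set.InjOn f (range k) := by
  intro s hs t ht h
  rw [coe_range, Set.mem_Iio] at hs ht
  rcases le_total s t with hst | hts
  · exact hf.eq_of_apply_eq h hst (by omega)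
  · exact (hf.eq_of_apply_eq h.symm hts (by omega)).symm

lemma apply_mem_image_range [DecidableEq V] (hf : IsCycleSeq A m f) (hm : 0 < m) (t : ℕ) :
    f t ∈ (range m).image f :=
  mem_image.2 ⟨t % m, mem_range.2 (Nat.mod_lt t hm), (hf.eq_iff _ _).2 (Nat.mod_mod t m)⟩

lemma apply_notMem_image_range [DecidableEq V] (hf : IsCycleSeq A m f) {k t : ℕ} (hkt : k ≤ t)
    (ht : t < m) : f t ∉ (range k).image f := by
  simp only [mem_image, mem_range, not_exists, not_and]
  intro s hs h
  have := hf.eq_of_apply_eq h (by omega) (by omega)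
  omega

lemma apply_sub_one_add_one (hf : IsCycleSeq A m f) (hm : 0 < m) : f (m - 1 + 1) = f 0 := by
  rw [Nat.sub_add_cancel hm, ← zero_add m, hf.apply_add_period]

lemma isDipath_segList (hf : IsCycleSeq A m f) {a b : ℕ} (hab : a ≤ b) (hbm : b < a + m) :
    IsDipath A (segList f a b) (f a) (f b) where
  nodup := by
    refine List.Nodup.map_on (fun s hs t ht h => ?_) List.nodup_range'
    rw [List.mem_range'_1] at hs ht
    rcases le_total s t with hst | hts
    · exact hf.eq_of_apply_eq h hst (by omega)
    · exact (hf.eq_of_apply_eq h.symm hts (by omega)).symm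
  isChain := (List.isChain_map _).2 <|
    (List.isChain_range' a _ 1).imp fun s t (h : t = s + 1) => h ▸ hf.adj s
  head?_eq := by
    rw [segList, show b + 1 - a = (b - a) + 1 by omega, List.range'_succ]; rfl
  getLast?_eq := by
    rw [segList, List.getLast?_map, List.getLast?_range', if_neg (by omega)]
    simp only [Option.map_some, Option.some_inj]
    congr 1
    omega

lemma disjoint_segList (hf : IsCycleSeq A m f) {a₁ b₁ a₂ b₂ : ℕ} (h₁ : b₁ < a₂)
    (h₂ : b₂ < a₁ + m) : (segList f a₁ b₁).Disjoint (segList f a₂ b₂) := by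
  intro v hv₁ hv₂
  obtain ⟨s₁, hs₁, hs₁', rfl⟩ := mem_segList.1 hv₁
  obtain ⟨s₂, hs₂, hs₂', h⟩ := mem_segList.1 hv₂
  have := hf.eq_of_apply_eq h.symm (by omega) (by omega)
  omega

lemma not_adj_and_adj (hf : IsCycleSeq A m f) (hlongest : CycleLengthsLE A m) (hm : 0 < m)
    {P : List V} {u w : V} (hP : IsDipath A P u w) (hoff : ∀ v ∈ P, ∀ t, f t ≠ v) (t : ℕ) :
    ¬ (A (f t) u ∧ A w (f (t + 1))) := by
  rintro ⟨htu, hwt⟩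
  have hC := hf.isDipath_segList (a := t + 1) (b := t + m) (by omega) (by omega)
  rw [hf.apply_add_period] at hC
  have := (hC.append hP htu (disjoint_segList_of_forall_ne hoff)).length_le hlongest hwt
  rw [List.length_append, length_segList] at this
  have := List.length_pos_iff.2 hP.ne_nil
  omega

/-- `f (k + 1) … f (m - 1) f (t + 1) … f k y f 0 … f t f (k + 1)` would be a cycle of length
`m + 1`. -/
lemma not_adj_and_adj_of_crossing (hf : IsCycleSeq A m f)
    (hlongest : CycleLengthsLE A m) {y : V} (hy : ∀ t, f t ≠ y) {k t : ℕ}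
    (hky : A (f k) y) (hy0 : A y (f 0)) (hkm : k + 1 < m) (htk : t < k) :
    ¬ (A (f (m - 1)) (f (t + 1)) ∧ A (f t) (f (k + 1))) := by
  rintro ⟨h₁, h₂⟩
  have hy' : ∀ v ∈ [y], ∀ t, f t ≠ v := by simpa using hy
  have hP₁ := hf.isDipath_segList (a := k + 1) (b := m - 1) (by omega) (by omega)
  have hP₂ := hf.isDipath_segList (a := t + 1) (b := k) (by omega) (by omega)
  have hP₃ := hf.isDipath_segList (a := 0) (b := t) (by omega) (by omega)
  have hP₁₂ := hP₁.append hP₂ h₁ (hf.disjoint_segList (by omega) (by omega)).symm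
  have hP₁₂y := hP₁₂.append (.singleton y) hky (List.disjoint_append_left.2
    ⟨disjoint_segList_of_forall_ne hy', disjoint_segList_of_forall_ne hy'⟩)
  have hC := hP₁₂y.append hP₃ hy0 (List.disjoint_append_left.2
    ⟨List.disjoint_append_left.2 ⟨(hf.disjoint_segList (by omega) (by omega)).symm,
      (hf.disjoint_segList (by omega) (by omega)).symm⟩, (disjoint_segList_of_forall_ne hy').symm⟩)
  have := hC.length_le hlongest h₂
  simp only [List.length_append, length_segList, List.length_singleton] at this
  omega

end IsCycleSeq

section Counting

variable {α : Type*} {s : Finset α} {p q : α → Prop} [DecidablePred p] [DecidablePred q]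

lemma card_filter_add_card_filter_le (h : ∀ x ∈ s, p x → ¬ q x) :
    #{x ∈ s | p x} + #{x ∈ s | q x} ≤ #s := by
  classical
  rw [← card_union_of_disjoint (disjoint_filter.2 h)]
  exact card_le_card (union_subset (filter_subset _ _) (filter_subset _ _))

lemma card_filter_add_card_filter_lt [DecidableEq α] {a : α} (ha : a ∈ s) (hpa : ¬ p a)
    (hqa : ¬ q a) (h : ∀ x ∈ s, p x → ¬ q x) :
    #{x ∈ s | p x} + #{x ∈ s | q x} < #s := by
  have := card_filter_add_card_filter_le (s := s.erase a) fun x hx => h x (mem_of_mem_erase hx)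
  rw [filter_erase, filter_erase, erase_eq_of_notMem (by simp [hpa]),
    erase_eq_of_notMem (by simp [hqa]), card_erase_of_mem ha] at this
  have := card_pos.2 ⟨a, ha⟩
  omega

lemma card_filter_range_add_card_filter_range_le {p q : ℕ → Prop} [DecidablePred p]
    [DecidablePred q] (L : ℕ) (h : ∀ t < L, p (t + 1) → ¬ q t) :
    #{t ∈ range (L + 1) | p t} + #{t ∈ range (L + 1) | q t} ≤ L + 2 := by
  have hp : #{t ∈ range (L + 1) | p t} ≤ #{t ∈ range L | p (t + 1)} + 1 := by
    rw [range_add_one', filter_insert, filter_map]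
    split_ifs
    · exact (card_insert_le _ _).trans (by rw [card_map]; rfl)
    · exact (card_map _).trans_le (Nat.le_succ _)
  have hq : #{t ∈ range (L + 1) | q t} ≤ #{t ∈ range L | q t} + 1 := by
    rw [range_add_one, filter_insert]
    split_ifs
    · exact card_insert_le _ _
    · omega
  have := card_filter_add_card_filter_le (s := range L) fun t ht => h t (mem_range.1 ht)
  rw [card_range] at this
  omega

end Counting

section Degrees

variable {A : V → V → Prop} [DecidableRel A] {x : V} {S T : Finset V}

lemma outDegOn_image [DecidableEq V] {α : Type*} {f : α → V} {s : Finset α}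
    (hf : Set.InjOn f s) :
    outDegOn A x (s.image f) = #{t ∈ s | A x (f t)} := by
  rw [outDegOn, filter_image, card_image_of_injOn (hf.mono (filter_subset _ _))]

lemma inDegOn_image [DecidableEq V] {α : Type*} {f : α → V} {s : Finset α}
    (hf : Set.InjOn f s) :
    inDegOn A x (s.image f) = #{t ∈ s | A (f t) x} := by
  rw [inDegOn, filter_image, card_image_of_injOn (hf.mono (filter_subset _ _))]

lemma outDegOn_lt_card (hirr : ∀ v, ¬ A v v) (hx : x ∈ S) : outDegOn A x S < #S :=
  card_lt_card (filter_ssubset.2 ⟨x, hx, hirr x⟩)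

lemma inDegOn_lt_card (hirr : ∀ v, ¬ A v v) (hx : x ∈ S) : inDegOn A x S < #S :=
  card_lt_card (filter_ssubset.2 ⟨x, hx, hirr x⟩)

lemma degOn_eq_zero (h : ∀ v ∈ S, ¬ A x v ∧ ¬ A v x) : degOn A x S = 0 := by
  rw [degOn, outDegOn, inDegOn, filter_false_of_mem fun v hv => (h v hv).1,
    filter_false_of_mem fun v hv => (h v hv).2]
  rfl

lemma outDegOn_sdiff_add [DecidableEq V] (hT : T ⊆ S) :
    outDegOn A x (S \ T) + outDegOn A x T = outDegOn A x S := by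
  simp only [outDegOn, card_filter]
  exact sum_sdiff hT

lemma inDegOn_sdiff_add [DecidableEq V] (hT : T ⊆ S) :
    inDegOn A x (S \ T) + inDegOn A x T = inDegOn A x S := by
  simp only [inDegOn, card_filter]
  exact sum_sdiff hT

lemma degOn_sdiff_add [DecidableEq V] (hT : T ⊆ S) :
    degOn A x (S \ T) + degOn A x T = degOn A x S := by
  simp only [degOn, ← outDegOn_sdiff_add hT, ← inDegOn_sdiff_add hT]
  ring

variable [Fintype V]

lemma outDeg_eq_add [DecidableEq V] (hT : T ⊆ S) :
    outDeg A x = outDegOn A x T + outDegOn A x (S \ T) + outDegOn A x (univ \ S) := by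
  rw [add_comm (outDegOn A x T), outDegOn_sdiff_add hT, add_comm,
    outDegOn_sdiff_add (subset_univ S)]
  rfl

lemma inDeg_eq_add [DecidableEq V] (hT : T ⊆ S) :
    inDeg A x = inDegOn A x T + inDegOn A x (S \ T) + inDegOn A x (univ \ S) := by
  rw [add_comm (inDegOn A x T), inDegOn_sdiff_add hT, add_comm,
    inDegOn_sdiff_add (subset_univ S)]
  rfl

end Degrees

namespace IsCycleSeq

variable {A : V → V → Prop} {m : ℕ} {f : ℕ → V} {y : V} {k : ℕ}

lemma add_one_lt (hf : IsCycleSeq A m f)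
    (hlongest : CycleLengthsLE A m) (hy : ∀ t, f t ≠ y)
    (hk : k < m) (hky : A (f k) y) (hy0 : A y (f 0)) : k + 1 < m := by
  refine lt_of_le_of_ne hk fun hkm => hf.not_adj_and_adj hlongest (by omega) (.singleton y)
    (by simpa using hy) k ⟨hky, ?_⟩
  rwa [hkm, ← zero_add m, hf.apply_add_period]

variable [DecidableRel A]

lemma degOn_image_range_le [DecidableEq V] (hf : IsCycleSeq A m f)
    (hlongest : CycleLengthsLE A m) (hm : 0 < m)
    (hy : ∀ t, f t ≠ y) (hk : k < m) : degOn A y ((range (k + 1)).image f) ≤ k + 2 := by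
  have hinj := hf.injOn_range (Nat.succ_le_of_lt hk)
  rw [degOn, outDegOn_image hinj, inDegOn_image hinj]
  exact card_filter_range_add_card_filter_range_le k fun t _ hyt hty =>
    hf.not_adj_and_adj hlongest hm (.singleton y) (by simpa using hy) t ⟨hty, hyt⟩

lemma outDegOn_add_inDegOn_image_range_le [DecidableEq V] (hf : IsCycleSeq A m f)
    (hlongest : CycleLengthsLE A m) (hy : ∀ t, f t ≠ y)
    (hky : A (f k) y) (hy0 : A y (f 0)) (hkm : k + 1 < m) :
    outDegOn A (f (m - 1)) ((range (k + 1)).image f) +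
      inDegOn A (f (k + 1)) ((range (k + 1)).image f) ≤ k + 2 := by
  have hinj := hf.injOn_range hkm.le
  rw [outDegOn_image hinj, inDegOn_image hinj]
  exact card_filter_range_add_card_filter_range_le k fun t htk h₁ h₂ =>
    hf.not_adj_and_adj_of_crossing hlongest hy hky hy0 hkm htk ⟨h₁, h₂⟩

variable [DecidableEq V] {R : Finset V}

lemma outDegOn_add_inDegOn_lt_card (hf : IsCycleSeq A m f)
    (hlongest : CycleLengthsLE A m) (hm : 0 < m)
    (hirr : ∀ v, ¬ A v v) (hR : ∀ z ∈ R, ∀ t, f t ≠ z) (hy : y ∈ R) (hky : A (f k) y)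
    (hyk : ¬ A y (f (k + 1))) : outDegOn A y R + inDegOn A (f (k + 1)) R < #R := by
  refine card_filter_add_card_filter_lt hy (hirr y) hyk fun z hz hyz hzk => ?_
  have hzy : z ≠ y := by rintro rfl; exact hirr z hyz
  exact hf.not_adj_and_adj hlongest hm ((IsDipath.singleton y).append (.singleton z) hyz
    (by simpa using hzy)) (by simpa using ⟨hR y hy, hR z hz⟩) k ⟨hky, hzk⟩

lemma inDegOn_add_outDegOn_lt_card (hf : IsCycleSeq A m f)
    (hlongest : CycleLengthsLE A m) (hm : 0 < m)
    (hirr : ∀ v, ¬ A v v) (hR : ∀ z ∈ R, ∀ t, f t ≠ z) (hy : y ∈ R) (hy0 : A y (f 0))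
    (hny : ¬ A (f (m - 1)) y) : inDegOn A y R + outDegOn A (f (m - 1)) R < #R := by
  refine card_filter_add_card_filter_lt hy (hirr y) hny fun z hz hzy hmz => ?_
  have hzy' : z ≠ y := by rintro rfl; exact hirr z hzy
  refine hf.not_adj_and_adj hlongest hm ((IsDipath.singleton z).append (.singleton y) hzy
    (by simpa using hzy'.symm)) (by simpa using ⟨hR z hz, hR y hy⟩) (m - 1) ⟨hmz, ?_⟩
  rwa [hf.apply_sub_one_add_one hm]

end IsCycleSeq

/-- The claim for `f t = x_{β+t}`: here `C″ = f[0, k]`, `x_α = f k`, `x_{α+1} = f (k + 1)` and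
`x_{β-1} = f (m - 1)`. -/
theorem IsCycleSeq.claim1_of_BJGY [Fintype V] [DecidableEq V] {A : V → V → Prop}
    [DecidableRel A] (hirr : ∀ v : V, ¬ A v v) {n : ℕ} (hn : n = Fintype.card V)
    (hcond : ∀ x y : V, x ≠ y → ¬ A x y → ¬ A y x →
      (∃ z : V, (A x z ∧ A y z) ∨ (A z x ∧ A z y)) →
      n - 1 ≤ min (outDeg A x + inDeg A y) (inDeg A x + outDeg A y))
    {m : ℕ} {f : ℕ → V} (hf : IsCycleSeq A m f) (hm : 0 < m)
    (hlongest : CycleLengthsLE A m)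
    {C R : Finset V} (hC : C = (range m).image f) (hR : R = univ \ C) {y : V} (hy : y ∈ R)
    {k : ℕ} (hk : k < m) (hky : A (f k) y) (hy0 : A y (f 0))
    {Cdd Cd : Finset V} (hCdd : Cdd = (range (k + 1)).image f) (hCd : Cd = C \ Cdd)
    (hnoarc : ∀ v ∈ Cd, ¬ A y v ∧ ¬ A v y) :
    1 ≤ #Cd ∧
    degOn A y C = #Cdd + 1 ∧
    degOn A y Cdd = #Cdd + 1 ∧
    outDegOn A (f (m - 1)) Cdd + inDegOn A (f (k + 1)) Cdd = #Cdd + 1 ∧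
    degOn A y R + outDegOn A (f (m - 1)) R + inDegOn A (f (k + 1)) R = 2 * (n - m - 1) ∧
    outDegOn A (f (m - 1)) Cd = #Cd - 1 ∧
    inDegOn A (f (k + 1)) Cd = #Cd - 1 := by
  subst hC hR hCdd hCd
  have hoff : ∀ z ∈ univ \ (range m).image f, ∀ t, f t ≠ z := by
    rintro z hz t rfl
    exact (mem_sdiff.1 hz).2 (hf.apply_mem_image_range hm t)
  have hkm := hf.add_one_lt hlongest (hoff y hy) hk hky hy0
  have hsub := image_subset_image (f := f) (range_subset_range.2 hkm.le)
  have hCd : ∀ t, k < t → t < m → f t ∈ (range m).image f \ (range (k + 1)).image f :=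
    fun t hkt htm => mem_sdiff.2
      ⟨hf.apply_mem_image_range hm t, hf.apply_notMem_image_range (by omega) htm⟩
  have hα₁ := hCd (k + 1) (by omega) hkm
  have hβ₁ := hCd (m - 1) (by omega) (by omega)
  have hcardCdd : #((range (k + 1)).image f) = k + 1 := by
    rw [card_image_of_injOn (hf.injOn_range hkm.le), card_range]
  have hcardC : #((range m).image f) = m := by
    rw [card_image_of_injOn (hf.injOn_range le_rfl), card_range]
  have hcardR : #(univ \ (range m).image f) = n - m := by
    rw [card_sdiff_of_subset (subset_univ _), card_univ, ← hn, hcardC]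
  have hcardCd := card_sdiff_of_subset hsub
  have hyR := card_pos.2 ⟨y, hy⟩
  have ha := hf.degOn_image_range_le hlongest hm (hoff y hy) hk
  have hb := hf.outDegOn_add_inDegOn_image_range_le hlongest (hoff y hy) hky hy0 hkm
  have hp := outDegOn_lt_card hirr hβ₁
  have hq := inDegOn_lt_card hirr hα₁
  have hr₁ := hf.outDegOn_add_inDegOn_lt_card hlongest hm hirr hoff hy hky (hnoarc _ hα₁).1
  have hr₂ := hf.inDegOn_add_outDegOn_lt_card hlongest hm hirr hoff hy hy0 (hnoarc _ hβ₁).2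
  have hyCd := degOn_eq_zero hnoarc
  have hyC := degOn_sdiff_add (A := A) (x := y) hsub
  have hlow₁ := (hcond y (f (k + 1)) (hoff y hy _).symm (hnoarc _ hα₁).1 (hnoarc _ hα₁).2
    ⟨f k, .inr ⟨hky, hf.adj k⟩⟩).trans (min_le_left _ _)
  have hlow₂ := (hcond y (f (m - 1)) (hoff y hy _).symm (hnoarc _ hβ₁).1 (hnoarc _ hβ₁).2
    ⟨f 0, .inl ⟨hy0, hf.apply_sub_one_add_one hm ▸ hf.adj (m - 1)⟩⟩).trans
    (min_le_right _ _)
  rw [outDeg_eq_add hsub, inDeg_eq_add hsub] at hlow₁ hlow₂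
  unfold degOn at ha hyCd hyC ⊢
  omega

/-- Claim 1. With `C = x₁…x_m x₁` a longest cycle of the
non-Hamiltonian strong digraph `D`, `R = V(D) - V(C)`, `y ∈ R`, `x_α y, y x_β ∈ A(D)`
(`x_α ≠ x_β`), and no arcs between `y` and the vertices of `C` outside the subpath
`C″ = C[x_β, x_α]`, one has, with `C′ = C[x_{α+1}, x_{β-1}]` (the vertices of `C`
outside `C″`): `|V(C′)| ≥ 1`, `d(y,C) = d(y,C″) = |C″|+1`,
`d⁺(x_{β-1},C″) + d⁻(x_{α+1},C″) = |C″|+1`,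
`d(y,R) + d⁺(x_{β-1},R) + d⁻(x_{α+1},R) = 2(n-m-1)`, and
`d⁺(x_{β-1},C′) = d⁻(x_{α+1},C′) = |C′|-1`. -/
theorem claim1_of_BJGY
    [Fintype V] [DecidableEq V] (A : V → V → Prop) [DecidableRel A]
    (hirr : ∀ v : V, ¬ A v v)
    (n : ℕ) (hn : n = Fintype.card V)
    (hcond : ∀ x y : V, x ≠ y → ¬ A x y → ¬ A y x →
      (∃ z : V, (A x z ∧ A y z) ∨ (A z x ∧ A z y)) →
      n - 1 ≤ min (outDeg A x + inDeg A y) (inDeg A x + outDeg A y) ∧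
      2 * n - 1 ≤ deg A x + deg A y)
    (m : ℕ) (c : Fin m → V) (hc : IsCycle A c)
    (hlongest : ∀ (k : ℕ) (d : Fin k → V), IsCycle A d → k ≤ m)
    (R : Finset V) (hR : R = Finset.univ \ Finset.image c Finset.univ)
    (y : V) (hy : y ∈ R)
    (α β : Fin m)
    (hαy : A (c α) y) (hyβ : A y (c β))
    (Cdd : Finset V) (hCdd : Cdd = (cycSeg β α).image c)
    (Cd : Finset V) (hCd : Cd = Finset.image c Finset.univ \ Cdd)
    (hnoarc : ∀ v ∈ Cd, ¬ A y v ∧ ¬ A v y) :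
    1 ≤ Cd.card ∧
    degOn A y (Finset.image c Finset.univ) = Cdd.card + 1 ∧
    degOn A y Cdd = Cdd.card + 1 ∧
    outDegOn A (c (finRot β (m - 1))) Cdd + inDegOn A (c (finRot α 1)) Cdd = Cdd.card + 1 ∧
    degOn A y R + outDegOn A (c (finRot β (m - 1))) R + inDegOn A (c (finRot α 1)) R
      = 2 * (n - m - 1) ∧
    outDegOn A (c (finRot β (m - 1))) Cd = Cd.card - 1 ∧
    inDegOn A (c (finRot α 1)) Cd = Cd.card - 1 := by
  set k := (α.val + m - β.val) % m
  have hα : finRot β k = α := finRot_mod_sub β α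
  have hC : univ.image c = (range m).image fun t => c (finRot β t) := by
    rw [← image_range_finRot β, image_image]
    rfl
  have hCdd' : Cdd = (range (k + 1)).image fun t => c (finRot β t) := by
    rw [hCdd, cycSeg, image_image]
    rfl
  rw [← hα, finRot_add, hC]
  rw [hC] at hR hCd
  exact (hc.isCycleSeq β).claim1_of_BJGY hirr hn
    (fun x z h₁ h₂ h₃ h₄ => (hcond x z h₁ h₂ h₃ h₄).1)
    β.pos hlongest rfl hR hy (Nat.mod_lt _ β.pos) (by rwa [← hα] at hαy)
    (by rwa [finRot_zero]) hCdd' hCd hnoarc
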